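/- arXiv:1103.4878 — 3 statements merged into one kernel-verified Lean document; each statement's English description precedes it below -/
import Mathlib

section
/- Let p be a prime and γ ∈ ℤ_p \ ℤ (a p-adic integer that is not a rational integer, assumed algebraic over ℚ and non-Liouville). Then the sequence of p-adic absolute values of the Pochhammer products satisfies lim_{n→∞} |γ(γ+1)⋯(γ+n)|_p^{1/(n+1)} = p^{-1/(p-1)}. -/
/-!
Fix `n`. Since `γ ∈ ℤ_p`, it is congruent modulo a power `p ^ B` to a positive integer `c`, and
taking `p ^ B` larger than the numerators of `γ, γ + 1, …, γ + n` forces `|γ + k|_p = |c + k|_p`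
for `k ≤ n`. Hence the product has the norm of `c (c + 1) ⋯ (c + n) = (c + n)! / (c - 1)!`, whose
valuation is `(n + 1 + s_p(c - 1) - s_p(c + n)) / (p - 1)` by Legendre's formula, `s_p` being the
base-`p` digit sum. As `B` can be chosen with `p ^ B = O(n)`, the digit sums are `O(log n)`.
-/

open Filter Finset Topology

lemma Nat.digits_sum_le_mul_log_add_one {b : ℕ} (hb : 1 < b) (m : ℕ) :
    (b.digits m).sum ≤ (b - 1) * (b.log m + 1) := by
  rcases eq_or_ne m 0 with rfl | hm
  · simp
  calc (b.digits m).sum ≤ (b.digits m).length • (b - 1) :=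
        List.sum_le_card_nsmul _ _ fun d hd => Nat.le_sub_one_of_lt (Nat.digits_lt_base hb hd)
    _ = (b - 1) * (b.log m + 1) := by rw [smul_eq_mul, Nat.length_digits b m hb hm, mul_comm]

lemma tendsto_natLog_mul_add_one_div_add_one {b K : ℕ} (hK : K ≠ 0) :
    Tendsto (fun n : ℕ => (b.log (K * (n + 1)) : ℝ) / (n + 1)) atTop (𝓝 0) := by
  have hlog : Tendsto (fun n : ℕ => Real.log (n + 1) / (n + 1)) atTop (𝓝 0) :=
    Real.isLittleO_log_id_atTop.tendsto_div_nhds_zero.comp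
      (tendsto_natCast_atTop_atTop.atTop_add tendsto_const_nhds)
  have hbound : Tendsto (fun n : ℕ =>
      (Real.log K * (1 / (n + 1)) + Real.log (n + 1) / (n + 1)) / Real.log b) atTop (𝓝 0) := by
    simpa using
      ((tendsto_one_div_add_atTop_nhds_zero_nat.const_mul (Real.log K)).add hlog).div_const _
  refine squeeze_zero (fun n => by positivity) (fun n => ?_) hbound
  calc (b.log (K * (n + 1)) : ℝ) / (n + 1) ≤ Real.logb b (K * (n + 1) : ℕ) / (n + 1) := by
        gcongr; exact Real.natLog_le_logb _ _
    _ = _ := by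
        rw [Real.logb, Nat.cast_mul, Real.log_mul (by exact_mod_cast hK) (by positivity)]
        push_cast
        ring

lemma tendsto_div_add_one_of_abs_mul_sub_le {r : ℝ} (hr : 0 < r) {v L : ℕ → ℝ}
    (hL : Tendsto (fun n => L n / (n + 1)) atTop (𝓝 0))
    (hvL : ∀ n, |r * v n - (n + 1)| ≤ r * L n) :
    Tendsto (fun n => v n / (n + 1)) atTop (𝓝 r⁻¹) := by
  rw [← tendsto_sub_nhds_zero_iff]
  refine squeeze_zero_norm (fun n => ?_) hL
  have hn : (0 : ℝ) < n + 1 := by positivity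
  calc ‖v n / (n + 1) - r⁻¹‖ = |r * v n - (n + 1)| / (r * (n + 1)) := by
        rw [Real.norm_eq_abs, ← abs_of_pos (mul_pos hr hn), ← abs_div]
        congr 1
        field_simp
    _ ≤ r * L n / (r * (n + 1)) := by gcongr; exact hvL n
    _ = L n / (n + 1) := mul_div_mul_left _ _ hr.ne'

variable {p : ℕ} [Fact p.Prime]

lemma sub_one_mul_padicValNat_ascFactorial (d k : ℕ) :
    ((p : ℤ) - 1) * padicValNat p ((d + 1).ascFactorial k) =
      k + (p.digits d).sum - (p.digits (d + k)).sum := by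
  have hsplit : padicValNat p d.factorial + padicValNat p ((d + 1).ascFactorial k) =
      padicValNat p (d + k).factorial := by
    rw [← Nat.factorial_mul_ascFactorial,
      padicValNat.mul (Nat.factorial_ne_zero d) (Nat.ascFactorial_pos d k).ne']
  have legendre (m : ℕ) : ((p : ℤ) - 1) * padicValNat p m.factorial = m - (p.digits m).sum := by
    rw [← Nat.cast_sub (Nat.digit_sum_le p m), ← sub_one_mul_padicValNat_factorial, Nat.cast_mul,
      Nat.cast_sub (Fact.out : p.Prime).one_le, Nat.cast_one]
  have hsplitZ : (padicValNat p d.factorial : ℤ) + padicValNat p ((d + 1).ascFactorial k) =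
      padicValNat p (d + k).factorial := by exact_mod_cast hsplit
  linear_combination
    ((p : ℤ) - 1) * hsplitZ + legendre (d + k) - legendre d + Nat.cast_add (R := ℤ) d k

lemma abs_sub_one_mul_padicValNat_ascFactorial_sub_le (d k : ℕ) :
    |((p : ℤ) - 1) * padicValNat p ((d + 1).ascFactorial k) - k| ≤
      ((p : ℤ) - 1) * (p.log (d + k) + 1) := by
  have digits_sum_le {m : ℕ} (hm : m ≤ d + k) :
      ((p.digits m).sum : ℤ) ≤ ((p : ℤ) - 1) * (p.log (d + k) + 1) := by
    have h := (Nat.digits_sum_le_mul_log_add_one (Fact.out : p.Prime).one_lt m).trans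
      (Nat.mul_le_mul_left (p - 1) (Nat.add_le_add_right (Nat.log_mono_right hm) 1))
    zify [(Fact.out : p.Prime).one_le] at h
    exact_mod_cast h
  rw [sub_one_mul_padicValNat_ascFactorial, abs_le]
  have hd := digits_sum_le (m := d) (by omega)
  have hdk := digits_sum_le (m := d + k) le_rfl
  have := Int.natCast_nonneg (p.digits d).sum
  have := Int.natCast_nonneg (p.digits (d + k)).sum
  constructor <;> linarith

namespace Padic

lemma pow_neg_lt_norm_intCast {z : ℤ} (hz : z ≠ 0) {B : ℕ} (hzB : z.natAbs < p ^ B) :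
    (p : ℝ) ^ (-B : ℤ) < ‖(z : ℚ_[p])‖ := by
  by_contra! h
  have := Int.natAbs_le_of_dvd_ne_zero ((norm_int_le_pow_iff_dvd z B).mp h) hz
  rw [Int.natAbs_pow, Int.natAbs_natCast] at this
  omega

lemma norm_natCast_eq_zpow_neg_padicValNat {m : ℕ} (hm : m ≠ 0) :
    ‖(m : ℚ_[p])‖ = (p : ℝ) ^ (-(padicValNat p m : ℤ)) := by
  rw [norm_eq_zpow_neg_valuation (by exact_mod_cast hm), valuation_natCast]

lemma exists_natCast_add_one_norm_sub_le {x : ℚ_[p]} (hx : ‖x‖ ≤ 1) (B : ℕ) :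
    ∃ d : ℕ, d < 2 * p ^ B ∧ ‖x - (d + 1 : ℕ)‖ ≤ (p : ℝ) ^ (-B : ℤ) := by
  set a := PadicInt.appr ⟨x, hx⟩ B
  have hpB : 0 < p ^ B := pow_pos (Fact.out : p.Prime).pos B
  refine ⟨a + p ^ B - 1, by have := PadicInt.appr_lt ⟨x, hx⟩ B; omega, ?_⟩
  have happr : ‖x - a‖ ≤ (p : ℝ) ^ (-B : ℤ) :=
    (PadicInt.norm_le_pow_iff_mem_span_pow _ B).mpr (PadicInt.appr_spec B ⟨x, hx⟩)
  rw [Nat.sub_add_cancel (by omega), Nat.cast_add, Nat.cast_pow, ← sub_sub, sub_eq_add_neg]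
  refine (nonarchimedean _ _).trans (max_le happr ?_)
  rw [norm_neg, norm_p_pow]

lemma pow_neg_lt_norm_ratCast_add_natCast {q : ℚ} {k B : ℕ} (hqk : q + k ≠ 0)
    (hB : (q.num + k * q.den).natAbs < p ^ B) :
    (p : ℝ) ^ (-B : ℤ) < ‖(q : ℚ_[p]) + k‖ := by
  have hnum : (q + k) * q.den = ((q.num + k * q.den : ℤ) : ℚ) := by
    push_cast; rw [add_mul, Rat.mul_den_eq_num]
  have hnum0 : q.num + k * q.den ≠ 0 := by
    rintro h
    rw [h, Int.cast_zero] at hnum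
    exact hqk ((mul_eq_zero.mp hnum).resolve_right (by exact_mod_cast q.den_nz))
  calc (p : ℝ) ^ (-B : ℤ) < ‖((q.num + k * q.den : ℤ) : ℚ_[p])‖ :=
        pow_neg_lt_norm_intCast hnum0 hB
    _ = ‖(q : ℚ_[p]) + k‖ * ‖(q.den : ℚ_[p])‖ := by
        rw [← norm_mul]; exact_mod_cast congrArg (fun x : ℚ => ‖(x : ℚ_[p])‖) hnum.symm
    _ ≤ ‖(q : ℚ_[p]) + k‖ :=
        mul_le_of_le_one_right (norm_nonneg _) (IsUltrametricDist.norm_natCast_le_one _ _)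

end Padic

lemma exists_norm_prod_add_natCast_eq_norm_ascFactorial {γ : ℚ} (hγ : ‖(γ : ℚ_[p])‖ ≤ 1)
    (hγk : ∀ k : ℕ, γ + k ≠ 0) (n : ℕ) :
    ∃ d : ℕ, d + (n + 1) ≤ (2 * p * (γ.num.natAbs + γ.den) + 1) * (n + 1) ∧
      ‖∏ k ∈ range (n + 1), ((γ : ℚ_[p]) + k)‖ =
        ‖(((d + 1).ascFactorial (n + 1) : ℕ) : ℚ_[p])‖ := by
  set M := γ.num.natAbs + (n + 1) * γ.den with hM_def
  set B := p.log M + 1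
  obtain ⟨d, hdB, hd⟩ := Padic.exists_natCast_add_one_norm_sub_le hγ B
  have hpB : p ^ B ≤ p * M := by
    rw [pow_succ, mul_comm]
    exact Nat.mul_le_mul_left _ (Nat.pow_log_le_self p (by positivity))
  have hM : M ≤ (γ.num.natAbs + γ.den) * (n + 1) := by
    rw [hM_def]; nlinarith [Nat.zero_le (γ.num.natAbs * n)]
  refine ⟨d, by nlinarith, ?_⟩
  rw [Nat.ascFactorial_eq_prod_range, Nat.cast_prod, norm_prod, norm_prod]
  refine prod_congr rfl fun k hk => Padic.norm_eq_of_norm_sub_lt_left ?_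
  have hkM : (γ.num + k * γ.den).natAbs < p ^ B := by
    have hkn : k * γ.den < (n + 1) * γ.den :=
      Nat.mul_lt_mul_of_pos_right (mem_range.mp hk) γ.den_pos
    calc (γ.num + k * γ.den).natAbs ≤ γ.num.natAbs + k * γ.den := by
          simpa only [Int.natAbs_mul, Int.natAbs_natCast] using
            Int.natAbs_add_le γ.num (k * γ.den)
      _ < M + 1 := by omega
      _ ≤ p ^ B := Nat.lt_pow_succ_log_self (Fact.out : p.Prime).one_lt M
  calc ‖(γ : ℚ_[p]) + k - (d + 1 + k : ℕ)‖ = ‖(γ : ℚ_[p]) - (d + 1 : ℕ)‖ := by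
        push_cast; ring_nf
    _ ≤ (p : ℝ) ^ (-B : ℤ) := hd
    _ < ‖(γ : ℚ_[p]) + k‖ := Padic.pow_neg_lt_norm_ratCast_add_natCast (hγk k) hkM

lemma tendsto_padicValNat_ascFactorial_div_add_one {d : ℕ → ℕ} {K : ℕ} (hK : K ≠ 0)
    (hd : ∀ n, d n + (n + 1) ≤ K * (n + 1)) :
    Tendsto (fun n => (padicValNat p ((d n + 1).ascFactorial (n + 1)) : ℝ) / (n + 1)) atTop
      (𝓝 ((p : ℝ) - 1)⁻¹) := by
  have hp : (1 : ℝ) < p := by exact_mod_cast (Fact.out : p.Prime).one_lt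
  have hL : Tendsto (fun n : ℕ => ((p.log (K * (n + 1)) : ℝ) + 1) / (n + 1)) atTop (𝓝 0) := by
    simpa only [add_zero, ← add_div] using
      (tendsto_natLog_mul_add_one_div_add_one (b := p) hK).add
        tendsto_one_div_add_atTop_nhds_zero_nat
  refine tendsto_div_add_one_of_abs_mul_sub_le (by linarith) hL fun n => ?_
  have h := abs_sub_one_mul_padicValNat_ascFactorial_sub_le (p := p) (d n) (n + 1)
  set v := padicValNat p ((d n + 1).ascFactorial (n + 1))
  have h' : |((p : ℝ) - 1) * v - (n + 1)| ≤
      ((p : ℝ) - 1) * (p.log (d n + (n + 1)) + 1) := by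
    exact_mod_cast h
  have hlog : (p.log (d n + (n + 1)) : ℝ) ≤ p.log (K * (n + 1)) := by
    exact_mod_cast Nat.log_mono_right (hd n)
  exact h'.trans (mul_le_mul_of_nonneg_left (by linarith) (by linarith))

/-- For a prime `p` and `γ ∈ ℚ ∩ ℤ_p \ ℤ` (rational, hence algebraic and non-Liouville),
`lim_{n→∞} |γ(γ+1)⋯(γ+n)|_p^{1/(n+1)} = p^{-1/(p-1)}`. -/
theorem pochhammer_padic_norm_root_tendsto
    (p : ℕ) [Fact p.Prime] (γ : ℚ)
    (hint : ‖(γ : ℚ_[p])‖ ≤ 1) (hnotZ : ∀ z : ℤ, γ ≠ (z : ℚ)) :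
    Tendsto
      (fun n : ℕ =>
        ‖∏ k ∈ Finset.range (n + 1), ((γ : ℚ_[p]) + (k : ℚ_[p]))‖ ^ ((1 : ℝ) / (n + 1)))
      atTop (nhds ((p : ℝ) ^ (-(1 : ℝ) / ((p : ℝ) - 1)))) := by
  have hγk (k : ℕ) : γ + k ≠ 0 := fun h => hnotZ (-k) (by push_cast; linarith)
  choose d hd hnorm using exists_norm_prod_add_natCast_eq_norm_ascFactorial hint hγk
  have hv := tendsto_padicValNat_ascFactorial_div_add_one (p := p) (Nat.succ_ne_zero _) hd
  have hroot (n : ℕ) : ‖∏ k ∈ range (n + 1), ((γ : ℚ_[p]) + k)‖ ^ ((1 : ℝ) / (n + 1)) =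
      (p : ℝ) ^ (-((padicValNat p ((d n + 1).ascFactorial (n + 1)) : ℝ) / (n + 1))) := by
    rw [hnorm, Padic.norm_natCast_eq_zpow_neg_padicValNat (Nat.ascFactorial_pos _ _).ne',
      ← Real.rpow_intCast, ← Real.rpow_mul (by positivity)]
    congr 1
    rw [Int.cast_neg, Int.cast_natCast]
    ring
  rw [show -(1 : ℝ) / ((p : ℝ) - 1) = -((p : ℝ) - 1)⁻¹ by ring]
  simp_rw [hroot]
  have hp0 : (p : ℝ) ≠ 0 := mod_cast (Fact.out : p.Prime).ne_zero
  exact (Real.continuousAt_const_rpow hp0).tendsto.comp hv.neg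
end

section
/- Let p be a prime, d ≥ 1, and γ_1,…,γ_d ∈ ℚ ∩ ℤ_p \ ℤ. For a multi-index α = (α_1,…,α_d) ∈ ℕ^d, set (γ)_{α+1} = ∏_{i=1}^d γ_i(γ_i+1)⋯(γ_i+α_i). Then lim_{|α|→∞} |(γ)_{α+1}|_p^{1/|α|} = p^{-1/(p-1)}, where |α| = α_1+⋯+α_d. -/
/-!
Write `γ = a / b`. For `k ≤ n` the numerators `a + k b` of `γ + k` are nonzero of size `O(n)`, so
all `v_p(γ + k)` are below some `J` with `p ^ J = O(n)`. Replacing `γ` by a natural number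
`c ≡ γ mod p ^ J` leaves every `|γ + k|_p` unchanged, and the product becomes
`|c (c + 1) ⋯ (c + n)|_p = |(c + n)! / (c - 1)!|_p`. By Legendre's formula its valuation `v`
satisfies `(p - 1) v = n + 1 + s_p(c - 1) - s_p(c + n)`, where the digit sums are `O(log n)`.
So each coordinate contributes `(p - 1) v_i = α_i + o(|α|)`, uniformly because the error bound is
monotone in `α_i ≤ |α|`; dividing the sum by `|α|` gives `v / |α| → 1 / (p - 1)`.
-/

open Filter Topology Asymptotics
open scoped Nat

theorem Nat.digits_sum_le_sub_one_mul_log_add_one {b : ℕ} (hb : 1 < b) (m : ℕ) :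
    (b.digits m).sum ≤ (b - 1) * (Nat.log b m + 1) := by
  rcases Nat.eq_zero_or_pos m with rfl | hm
  · simp
  calc (b.digits m).sum ≤ (b.digits m).length • (b - 1) :=
        List.sum_le_card_nsmul _ _ fun x hx => Nat.le_sub_one_of_lt (Nat.digits_lt_base hb hx)
    _ = (b - 1) * (Nat.log b m + 1) := by
      rw [Nat.length_digits b m hb hm.ne', smul_eq_mul, mul_comm]

theorem sub_one_mul_padicValNat_ascFactorial_add_digits_sum (p : ℕ) [Fact p.Prime] (m n : ℕ) :
    (p - 1) * padicValNat p ((m + 1).ascFactorial n) + (p.digits (m + n)).sum =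
      n + (p.digits m).sum := by
  have hval : padicValNat p m ! + padicValNat p ((m + 1).ascFactorial n) =
      padicValNat p (m + n)! := by
    rw [← Nat.factorial_mul_ascFactorial, padicValNat.mul (Nat.factorial_ne_zero _)
      (Nat.ascFactorial_pos _ _).ne']
  have h₁ := sub_one_mul_padicValNat_factorial (p := p) m
  have h₂ := sub_one_mul_padicValNat_factorial (p := p) (m + n)
  have := Nat.digit_sum_le p m
  have := Nat.digit_sum_le p (m + n)
  rw [← hval, mul_add] at h₂
  omega

theorem abs_sub_one_mul_padicValNat_ascFactorial_sub_le_s1 (p : ℕ) [Fact p.Prime] (m n : ℕ) :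
    |((p : ℝ) - 1) * padicValNat p ((m + 1).ascFactorial n) - n| ≤
      (p - 1) * (Nat.log p (m + n) + 1) := by
  have hp := (Fact.out : p.Prime).one_lt
  have key := sub_one_mul_padicValNat_ascFactorial_add_digits_sum p m n
  have hs₁ := Nat.digits_sum_le_sub_one_mul_log_add_one hp m
  have hs₂ := Nat.digits_sum_le_sub_one_mul_log_add_one hp (m + n)
  have hlog : Nat.log p m ≤ Nat.log p (m + n) := Nat.log_mono_right (Nat.le_add_right m n)
  generalize (p.digits m).sum = s₁ at *
  generalize (p.digits (m + n)).sum = s₂ at *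
  have hs₁' : s₁ ≤ (p - 1) * (Nat.log p (m + n) + 1) := hs₁.trans (by gcongr)
  have hR : ((p - 1 : ℕ) : ℝ) * padicValNat p ((m + 1).ascFactorial n) + s₂ = n + s₁ := by
    exact_mod_cast key
  have hR₁ : (s₁ : ℝ) ≤ (p - 1 : ℕ) * (Nat.log p (m + n) + 1) := by exact_mod_cast hs₁'
  have hR₂ : (s₂ : ℝ) ≤ (p - 1 : ℕ) * (Nat.log p (m + n) + 1) := by exact_mod_cast hs₂
  rw [← Nat.cast_pred hp.le, abs_sub_le_iff]
  constructor <;> linarith [(s₁.cast_nonneg : (0 : ℝ) ≤ s₁), (s₂.cast_nonneg : (0 : ℝ) ≤ s₂)]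

theorem Nat.isLittleO_log_mul_add_one (b K : ℕ) :
    (fun n : ℕ => (Nat.log b (K * (n + 1)) : ℝ)) =o[atTop] (fun n : ℕ => (n : ℝ)) := by
  rcases K.eq_zero_or_pos with rfl | hK
  · simp
  have hK' : (K : ℝ) ≠ 0 := by positivity
  have hlog : Tendsto (fun n : ℕ => Real.log (K * (n + 1)) / n) atTop (𝓝 0) := by
    have hy : Tendsto (fun n : ℕ => (K : ℝ) * (n + 1)) atTop atTop :=
      (tendsto_natCast_atTop_atTop.atTop_add tendsto_const_nhds).const_mul_atTop (by positivity)
    refine ((Real.tendsto_pow_log_div_mul_add_atTop (K : ℝ)⁻¹ (-1) 1 (inv_ne_zero hK')).comp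
      hy).congr fun n => ?_
    simp only [Function.comp, pow_one]
    field_simp
    ring
  rw [isLittleO_iff_tendsto' ((eventually_gt_atTop 0).mono fun n hn h =>
    absurd h (Nat.cast_ne_zero.2 hn.ne'))]
  refine squeeze_zero (fun n => by positivity) (fun n => ?_)
    (by simpa using hlog.div_const (Real.log b))
  rw [div_right_comm]
  gcongr
  simpa [Real.logb] using Real.natLog_le_logb (K * (n + 1)) b

theorem tendsto_sum_div_sum_of_abs_sub_le {ι : Type*} [Fintype ι] {f g : ι → ℕ → ℝ} {L : ℝ}
    (hg_mono : ∀ i, Monotone (g i)) (hg : ∀ i, g i =o[atTop] (fun n : ℕ => (n : ℝ)))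
    (hfg : ∀ i n, |f i n - L * n| ≤ g i n) :
    Tendsto (fun α : ι → ℕ => (∑ i, f i (α i)) / (∑ i, α i : ℕ))
      (comap (fun α : ι → ℕ => ∑ i, α i) atTop) (𝓝 L) := by
  have hS : Tendsto (fun α : ι → ℕ => ∑ i, α i) (comap (fun α => ∑ i, α i) atTop) atTop :=
    tendsto_comap
  have hG : Tendsto (fun N : ℕ => (∑ i, g i N) / N) atTop (𝓝 0) := by
    simpa [Finset.sum_div] using tendsto_finsetSum _ fun i _ => (hg i).tendsto_div_nhds_zero
  rw [tendsto_iff_norm_sub_tendsto_zero]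
  refine squeeze_zero' (Eventually.of_forall fun _ => norm_nonneg _) ?_ (hG.comp hS)
  filter_upwards [hS.eventually_ne_atTop 0] with α hα
  have hα' : ((∑ i, α i : ℕ) : ℝ) ≠ 0 := by exact_mod_cast hα
  calc ‖(∑ i, f i (α i)) / (∑ i, α i : ℕ) - L‖
      = |∑ i, (f i (α i) - L * α i)| / (∑ i, α i : ℕ) := by
        rw [Real.norm_eq_abs, div_sub' hα', abs_div, Nat.abs_cast, Finset.sum_sub_distrib,
          ← Finset.mul_sum, Nat.cast_sum, mul_comm]
    _ ≤ (∑ i, g i (α i)) / (∑ i, α i : ℕ) := by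
        gcongr
        exact (Finset.abs_sum_le_sum_abs _ _).trans (Finset.sum_le_sum fun i _ => hfg i (α i))
    _ ≤ (∑ i, g i (∑ j, α j)) / (∑ i, α i : ℕ) := by
        gcongr with i
        exact hg_mono i (Finset.single_le_sum (fun j _ => (α j).zero_le) (Finset.mem_univ i))

section Padic

variable {p : ℕ} [Fact p.Prime]

theorem Padic.pow_neg_lt_norm_intCast_s1 {m : ℤ} (hm : m ≠ 0) {J : ℕ} (hmJ : m.natAbs < p ^ J) :
    (p : ℝ) ^ (-J : ℤ) < ‖(m : ℚ_[p])‖ := by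
  rw [← not_le, Padic.norm_int_le_pow_iff_dvd]
  exact fun h => hm (Int.eq_zero_of_dvd_of_natAbs_lt_natAbs h (by simpa using hmJ))

theorem Padic.pow_neg_lt_norm_ratCast_add_natCast_s1 {γ : ℚ} (hγ : ∀ z : ℤ, γ ≠ z) {k J : ℕ}
    (hJ : γ.num.natAbs + k * γ.den < p ^ J) :
    (p : ℝ) ^ (-J : ℤ) < ‖(γ : ℚ_[p]) + k‖ := by
  have hden : (γ.den : ℚ) ≠ 0 := by positivity
  have hm : ((γ.num + k * γ.den : ℤ) : ℚ) = (γ + k) * γ.den := by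
    push_cast
    rw [add_mul, Rat.mul_den_eq_num]
  have hm₀ : γ.num + k * γ.den ≠ 0 := by
    refine fun h => hγ (-k) ?_
    rw [h, Int.cast_zero, eq_comm, mul_eq_zero, or_iff_left hden] at hm
    push_cast
    linarith
  calc (p : ℝ) ^ (-J : ℤ) < ‖((γ.num + k * γ.den : ℤ) : ℚ_[p])‖ := by
        refine Padic.pow_neg_lt_norm_intCast_s1 hm₀ (lt_of_le_of_lt ?_ hJ)
        simpa [Int.natAbs_mul] using Int.natAbs_add_le γ.num (k * γ.den)
    _ = ‖(γ : ℚ_[p]) + k‖ * ‖((γ.den : ℤ) : ℚ_[p])‖ := by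
        rw [← norm_mul]
        exact_mod_cast congrArg (fun q : ℚ => ‖(q : ℚ_[p])‖) hm
    _ ≤ ‖(γ : ℚ_[p]) + k‖ :=
        mul_le_of_le_one_right (norm_nonneg _) (Padic.norm_int_le_one _)

theorem Padic.exists_norm_ratCast_add_natCast_eq {γ : ℚ} (hγ₁ : ‖(γ : ℚ_[p])‖ ≤ 1)
    (hγ : ∀ z : ℤ, γ ≠ z) :
    ∃ K : ℕ, ∀ n : ℕ, ∃ m : ℕ, m + (n + 1) ≤ K * (n + 1) ∧
      ∀ k ≤ n, ‖(γ : ℚ_[p]) + k‖ = ‖((m + 1 + k : ℕ) : ℚ_[p])‖ := by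
  have hp := (Fact.out : p.Prime).one_lt
  refine ⟨p * (γ.num.natAbs + γ.den) + 1, fun n => ?_⟩
  set M := γ.num.natAbs + (n + 1) * γ.den
  set J := Nat.log p M + 1
  have hMJ : M < p ^ J := Nat.lt_pow_succ_log_self hp M
  have hlt : ∀ k ≤ n, (p : ℝ) ^ (-J : ℤ) < ‖(γ : ℚ_[p]) + k‖ := fun k hk =>
    Padic.pow_neg_lt_norm_ratCast_add_natCast_s1 hγ <| lt_of_le_of_lt
      (Nat.add_le_add_left (Nat.mul_le_mul_right _ (by omega)) _) hMJ
  obtain ⟨x, hx⟩ : ∃ x : ℤ_[p], (x : ℚ_[p]) = γ := ⟨⟨γ, hγ₁⟩, rfl⟩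
  have hc : ‖(γ : ℚ_[p]) - x.appr J‖ ≤ (p : ℝ) ^ (-J : ℤ) := by
    have := (PadicInt.norm_le_pow_iff_mem_span_pow _ _).2 (x.appr_spec J)
    rwa [PadicInt.norm_def, PadicInt.coe_sub, PadicInt.coe_natCast, hx] at this
  obtain ⟨m, hm⟩ : ∃ m, x.appr J = m + 1 := by
    refine Nat.exists_eq_add_one.2 (Nat.pos_of_ne_zero fun h => ?_)
    have := hlt 0 n.zero_le
    simp only [h, Nat.cast_zero, sub_zero, add_zero] at hc this
    linarith
  refine ⟨m, ?_, fun k hk => ?_⟩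
  · have hxJ := hm ▸ x.appr_lt J
    have hpM : p ^ J ≤ p * M := by
      rw [pow_succ']
      exact Nat.mul_le_mul_left p (Nat.pow_log_le_self p (by positivity))
    have hmM : m + 1 < p * (γ.num.natAbs + (n + 1) * γ.den) := hxJ.trans_le hpM
    have : p * γ.num.natAbs ≤ p * γ.num.natAbs * (n + 1) := Nat.le_mul_of_pos_right _ n.succ_pos
    nlinarith
  · refine (Padic.norm_eq_of_norm_sub_lt_right ?_).symm
    rw [show ((m + 1 + k : ℕ) : ℚ_[p]) - (γ + k) = -((γ : ℚ_[p]) - x.appr J) by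
      rw [hm]; push_cast; ring, norm_neg]
    exact hc.trans_lt (hlt k hk)

theorem Padic.norm_natCast_eq_rpow_neg_padicValNat {N : ℕ} (hN : N ≠ 0) :
    ‖(N : ℚ_[p])‖ = (p : ℝ) ^ (-(padicValNat p N : ℝ)) := by
  rw [Padic.norm_eq_zpow_neg_valuation (Nat.cast_ne_zero.2 hN), Padic.valuation_natCast,
    ← Real.rpow_intCast]
  simp only [Int.cast_neg, Int.cast_natCast]

theorem Padic.exists_norm_prod_ratCast_add_natCast_eq_rpow {γ : ℚ} (hγ₁ : ‖(γ : ℚ_[p])‖ ≤ 1)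
    (hγ : ∀ z : ℤ, γ ≠ z) :
    ∃ (e : ℕ → ℕ) (g : ℕ → ℝ), Monotone g ∧ g =o[atTop] (fun n : ℕ => (n : ℝ)) ∧ ∀ n,
      ‖∏ k ∈ Finset.range (n + 1), ((γ : ℚ_[p]) + k)‖ = (p : ℝ) ^ (-(e n : ℝ)) ∧
      |((p : ℝ) - 1) * e n - n| ≤ g n := by
  have hp : (1 : ℝ) ≤ p := by exact_mod_cast (Fact.out : p.Prime).one_lt.le
  obtain ⟨K, hK⟩ := Padic.exists_norm_ratCast_add_natCast_eq hγ₁ hγ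
  choose m hmK hm using hK
  refine ⟨fun n => padicValNat p ((m n + 1).ascFactorial (n + 1)),
    fun n => (p - 1) * Nat.log p (K * (n + 1)) + p, fun a b hab => ?_,
    ((Nat.isLittleO_log_mul_add_one p K).const_mul_left _).add ?_, fun n => ⟨?_, ?_⟩⟩
  · dsimp only
    gcongr
  · exact isLittleO_const_left.2 <| .inr <|
      tendsto_norm_atTop_atTop.comp tendsto_natCast_atTop_atTop
  · rw [← Padic.norm_natCast_eq_rpow_neg_padicValNat (Nat.ascFactorial_pos _ _).ne',
      Nat.ascFactorial_eq_prod_range, norm_prod, Nat.cast_prod, norm_prod]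
    exact Finset.prod_congr rfl fun k hk => hm n k (Finset.mem_range_succ_iff.1 hk)
  · have h := abs_sub_one_mul_padicValNat_ascFactorial_sub_le_s1 p (m n) (n + 1)
    have hlog : (Nat.log p (m n + (n + 1)) : ℝ) ≤ Nat.log p (K * (n + 1)) := by
      exact_mod_cast Nat.log_mono_right (hmK n)
    have := mul_le_mul_of_nonneg_left hlog (by linarith : (0 : ℝ) ≤ p - 1)
    rw [abs_le] at h ⊢
    push_cast at h
    constructor <;> linarith

end Padic

theorem multi_pochhammer_padic_norm_root_tendsto_general
    (p : ℕ) [Fact p.Prime] (d : ℕ) (γ : Fin d → ℚ)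
    (hint : ∀ i, ‖((γ i : ℚ) : ℚ_[p])‖ ≤ 1) (hnotZ : ∀ i, ∀ z : ℤ, γ i ≠ (z : ℚ)) :
    Tendsto
      (fun α : Fin d → ℕ =>
        ‖∏ i, ∏ k ∈ Finset.range (α i + 1), ((γ i : ℚ_[p]) + (k : ℚ_[p]))‖
          ^ ((1 : ℝ) / (∑ i, α i : ℕ)))
      (comap (fun α : Fin d → ℕ => ∑ i, α i) atTop)
      (nhds ((p : ℝ) ^ (-(1 : ℝ) / ((p : ℝ) - 1)))) := by
  have hp : (1 : ℝ) < p := by exact_mod_cast (Fact.out : p.Prime).one_lt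
  choose e g hg_mono hg hnorm hbound using fun i =>
    Padic.exists_norm_prod_ratCast_add_natCast_eq_rpow (hint i) (hnotZ i)
  have hE := tendsto_sum_div_sum_of_abs_sub_le (f := fun i n => ((p : ℝ) - 1) * e i n) (L := 1)
    hg_mono hg (by simpa using hbound)
  have hrpow : Tendsto (fun x : ℝ => (p : ℝ) ^ (-x / (p - 1))) (𝓝 1)
      (𝓝 ((p : ℝ) ^ (-1 / ((p : ℝ) - 1)))) :=
    (Real.continuousAt_const_rpow (by positivity)).tendsto.comp
      ((continuous_neg.div_const _).tendsto 1)
  refine (hrpow.comp hE).congr fun α => ?_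
  simp only [Function.comp_apply, norm_prod, hnorm]
  rw [← Real.rpow_sum_of_pos (by positivity), ← Real.rpow_mul (by positivity), ← Finset.mul_sum]
  have hp' : (p : ℝ) - 1 ≠ 0 := by linarith
  congr 1
  rw [Finset.sum_neg_distrib]
  field_simp

/-- For `γ_1,…,γ_d ∈ ℚ ∩ ℤ_p \ ℤ`, the multi-index Pochhammer products satisfy
`lim_{|α|→∞} |(γ)_{α+1}|_p^{1/|α|} = p^{-1/(p-1)}`, where the limit is taken along
the filter of multi-indices `α ∈ ℕ^d` with `|α| = α_1 + ⋯ + α_d → ∞`. -/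
theorem multi_pochhammer_padic_norm_root_tendsto
    (p : ℕ) [Fact p.Prime] (d : ℕ) (hd : 1 ≤ d) (γ : Fin d → ℚ)
    (hint : ∀ i, ‖((γ i : ℚ) : ℚ_[p])‖ ≤ 1) (hnotZ : ∀ i, ∀ z : ℤ, γ i ≠ (z : ℚ)) :
    Tendsto
      (fun α : Fin d → ℕ =>
        ‖∏ i, ∏ k ∈ Finset.range (α i + 1), ((γ i : ℚ_[p]) + (k : ℚ_[p]))‖
          ^ ((1 : ℝ) / (∑ i, α i : ℕ)))
      (comap (fun α : Fin d → ℕ => ∑ i, α i) atTop)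
      (nhds ((p : ℝ) ^ (-(1 : ℝ) / ((p : ℝ) - 1)))) :=
  multi_pochhammer_padic_norm_root_tendsto_general p d γ hint hnotZ
end

section
/- Let J = γI_m + N be an m×m Jordan block over ℚ_p, with γ ∈ ℤ_p and N nilpotent with N^m = 0, and let τ ∈ ℚ_p \ {0}. For n ≥ 1 define C_{J,τ}(n) = τ^{-n}∏_{ℓ=1}^n (J + ℓI). Suppose |γ+ℓ|_p ≥ (θℓ)^{-1} for all ℓ ≥ 1 (some θ > 0, e.g. γ ∈ ℚ ∩ ℤ_p \ ℤ), and that the off-diagonal entries of N have p-adic absolute value at most 1. Then |τ^{-n}(γ+1)_n|_p ≤ ‖C_{J,τ}(n)‖_p ≤ (θn)^{m-1} |τ^{-n}(γ+1)_n|_p for all n ≥ 1, where (γ+1)_n = (γ+1)(γ+2)⋯(γ+n) and ‖·‖_p is the entrywise max p-adic norm. -/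
section

variable {K : Type*} [Field K] {ι : Type*} [Fintype ι] [DecidableEq ι]

/-- `upProd Λ n = (Λ + nI)(Λ + (n-1)I)⋯(Λ + I)`. -/
def upProd (Λ : Matrix ι ι K) : ℕ → Matrix ι ι K
  | 0 => 1
  | m + 1 => (Λ + ((m : K) + 1) • (1 : Matrix ι ι K)) * upProd Λ m

end

/-- Entrywise max `p`-adic norm of a matrix. -/
noncomputable def pMatNorm {p : ℕ} [Fact p.Prime] {m n : Type*} [Fintype m] [Fintype n]
    [Nonempty m] [Nonempty n] (Y : Matrix m n ℚ_[p]) : ℝ :=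
  Finset.univ.sup' Finset.univ_nonempty
    (fun i : m => Finset.univ.sup' Finset.univ_nonempty (fun j : n => ‖Y i j‖))

/-!
Write `C_{J,τ}(n) = τ⁻ⁿ P(N)` with `P = ∏_{ℓ<n} (X + γ + 1 + ℓ)`. Since `N` is strictly upper
triangular, `(Nᵗ)ᵢⱼ = 0` unless `j ≥ i + t`; so the diagonal of `P(N)` is `P(0) = (γ+1)ₙ`, and only
`t < m` contribute to an entry. By Vieta, the `t`-th coefficient of `P` is a sum of products of the
factors `γ + 1 + ℓ` with `t` of them omitted; each omitted factor has norm `≥ (θn)⁻¹`, so the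
ultrametric inequality bounds that coefficient by `(θn)ᵗ |(γ+1)ₙ|`, while the entries of `Nᵗ` have
norm `≤ 1`.
-/

open Polynomial Finset

theorem norm_le_pMatNorm {p : ℕ} [Fact p.Prime] {m n : Type*} [Fintype m] [Fintype n]
    [Nonempty m] [Nonempty n] (Y : Matrix m n ℚ_[p]) (i : m) (j : n) :
    ‖Y i j‖ ≤ pMatNorm Y :=
  (le_sup' (fun j => ‖Y i j‖) (mem_univ j)).trans
    (le_sup' (fun i => univ.sup' univ_nonempty fun j => ‖Y i j‖) (mem_univ i))

theorem pMatNorm_le {p : ℕ} [Fact p.Prime] {m n : Type*} [Fintype m] [Fintype n]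
    [Nonempty m] [Nonempty n] {Y : Matrix m n ℚ_[p]} {C : ℝ} (h : ∀ i j, ‖Y i j‖ ≤ C) :
    pMatNorm Y ≤ C :=
  sup'_le _ _ fun i _ => sup'_le _ _ fun j _ => h i j

theorem upProd_smul_one_add_eq_aeval {K ι : Type*} [Field K] [Fintype ι] [DecidableEq ι]
    (a : K) (N : Matrix ι ι K) (n : ℕ) :
    upProd (a • (1 : Matrix ι ι K) + N) n =
      aeval N (∏ ℓ ∈ range n, (X + C (a + 1 + (ℓ : K)))) := by
  induction n with
  | zero => simp [upProd]
  | succ n ih =>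
    rw [upProd, ih, prod_range_succ, mul_comm _ (X + C _), map_mul, map_add, aeval_X, aeval_C,
      Algebra.algebraMap_eq_smul_one]
    congr 1
    module

theorem norm_coeff_prod_X_add_C_le {K ι : Type*} [NormedField K] [IsUltrametricDist K]
    (s : Finset ι) (c : ι → K) {R : ℝ} (hR : 0 < R) (hc : ∀ i ∈ s, R⁻¹ ≤ ‖c i‖) (t : ℕ) :
    ‖(∏ i ∈ s, (X + C (c i))).coeff t‖ ≤ R ^ t * ‖∏ i ∈ s, c i‖ := by
  classical
  rcases lt_or_ge #s t with hts | hts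
  · have hdeg : (∏ i ∈ s, (X + C (c i))).natDegree < t := by
      rw [natDegree_prod_of_monic _ _ fun i _ => monic_X_add_C (c i)]
      simpa using hts
    rw [coeff_eq_zero_of_natDegree_lt hdeg, norm_zero]
    positivity
  rw [prod_X_add_C_coeff s c hts]
  refine IsUltrametricDist.norm_sum_le_of_forall_le_of_nonneg (by positivity) fun S hS => ?_
  obtain ⟨hSs, hScard⟩ := mem_powersetCard.mp hS
  have hcompl : R⁻¹ ^ t ≤ ∏ i ∈ s \ S, ‖c i‖ := by
    have : #(s \ S) = t := by rw [card_sdiff_of_subset hSs, hScard]; omega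
    calc R⁻¹ ^ t = ∏ _i ∈ s \ S, R⁻¹ := by rw [prod_const, this]
      _ ≤ ∏ i ∈ s \ S, ‖c i‖ :=
        prod_le_prod (fun _ _ => by positivity) fun i hi => hc i (mem_sdiff.mp hi).1
  calc ‖∏ i ∈ S, c i‖ = R ^ t * (R⁻¹ ^ t * ‖∏ i ∈ S, c i‖) := by
        rw [← mul_assoc, ← mul_pow, mul_inv_cancel₀ hR.ne', one_pow, one_mul]
    _ ≤ R ^ t * ((∏ i ∈ s \ S, ‖c i‖) * ‖∏ i ∈ S, c i‖) := by gcongr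
    _ = R ^ t * ‖∏ i ∈ s, c i‖ := by rw [norm_prod, norm_prod, prod_sdiff hSs]

theorem Matrix.pow_apply_eq_zero_of_lt_add {R : Type*} [Semiring R] {m : ℕ}
    {N : Matrix (Fin m) (Fin m) R} (hN : ∀ i j : Fin m, (j : ℕ) ≤ i → N i j = 0) (t : ℕ)
    {i j : Fin m} (hij : (j : ℕ) < i + t) : (N ^ t) i j = 0 := by
  induction t generalizing j with
  | zero => exact Matrix.one_apply_ne (Fin.ne_of_gt (by simpa using hij))
  | succ t ih =>
    rw [pow_succ, Matrix.mul_apply]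
    refine sum_eq_zero fun k _ => ?_
    rcases lt_or_ge (k : ℕ) (i + t) with hk | hk
    · rw [ih hk, zero_mul]
    · rw [hN k j (by omega), mul_zero]

theorem Matrix.norm_pow_apply_le_one {R ι : Type*} [NormedRing R] [NormOneClass R]
    [IsUltrametricDist R] [Fintype ι] [DecidableEq ι] {N : Matrix ι ι R}
    (hN : ∀ i j, ‖N i j‖ ≤ 1) (t : ℕ) (i j : ι) : ‖(N ^ t) i j‖ ≤ 1 := by
  induction t generalizing j with
  | zero =>
    rw [pow_zero, Matrix.one_apply]
    split_ifs <;> simp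
  | succ t ih =>
    rw [pow_succ, Matrix.mul_apply]
    refine IsUltrametricDist.norm_sum_le_of_forall_le_of_nonneg zero_le_one fun k _ => ?_
    exact (norm_mul_le _ _).trans (mul_le_one₀ (ih k) (norm_nonneg _) (hN k j))

theorem Matrix.aeval_apply_eq_sum {K ι : Type*} [CommSemiring K] [Fintype ι] [DecidableEq ι]
    (N : Matrix ι ι K) (P : K[X]) (i j : ι) :
    aeval N P i j = ∑ t ∈ range (P.natDegree + 1), P.coeff t * (N ^ t) i j := by
  simp [aeval_eq_sum_range, Matrix.sum_apply]

theorem Matrix.aeval_apply_self_of_strictlyUpper {K : Type*} [CommSemiring K] {m : ℕ}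
    {N : Matrix (Fin m) (Fin m) K} (hN : ∀ i j : Fin m, (j : ℕ) ≤ i → N i j = 0)
    (P : K[X]) (i : Fin m) : aeval N P i i = P.coeff 0 := by
  rw [Matrix.aeval_apply_eq_sum, sum_eq_single 0]
  · simp
  · intro t _ ht
    rw [Matrix.pow_apply_eq_zero_of_lt_add hN t (by omega), mul_zero]
  · simp

theorem Matrix.norm_aeval_apply_le_of_strictlyUpper {K : Type*} [NormedField K]
    [IsUltrametricDist K] {m : ℕ} {N : Matrix (Fin m) (Fin m) K}
    (hN : ∀ i j : Fin m, (j : ℕ) ≤ i → N i j = 0) (hbd : ∀ i j, ‖N i j‖ ≤ 1)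
    {P : K[X]} {R A : ℝ} (hR : 1 ≤ R) (hP : ∀ t, ‖P.coeff t‖ ≤ R ^ t * A) (i j : Fin m) :
    ‖aeval N P i j‖ ≤ R ^ (m - 1) * A := by
  have hA : 0 ≤ A := by simpa using (norm_nonneg _).trans (hP 0)
  rw [Matrix.aeval_apply_eq_sum]
  refine IsUltrametricDist.norm_sum_le_of_forall_le_of_nonneg (by positivity) fun t _ => ?_
  rcases lt_or_ge t m with htm | htm
  · calc ‖P.coeff t * (N ^ t) i j‖ ≤ ‖P.coeff t‖ * 1 :=
          norm_mul_le_of_le le_rfl (Matrix.norm_pow_apply_le_one hbd t i j)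
      _ ≤ R ^ (m - 1) * A := by
          rw [mul_one]
          exact (hP t).trans (by gcongr; omega)
  · rw [Matrix.pow_apply_eq_zero_of_lt_add hN t (by omega), mul_zero, norm_zero]
    positivity

theorem jordan_block_Cmat_norm_bounds_general
    (p : ℕ) [Fact p.Prime] (m : ℕ) [NeZero m] (γ : ℤ_[p])
    (N : Matrix (Fin m) (Fin m) ℚ_[p])
    (htri : ∀ i j : Fin m, (j : ℕ) ≤ (i : ℕ) → N i j = 0)
    (hbd : ∀ i j : Fin m, ‖N i j‖ ≤ 1)
    (τ : ℚ_[p]) (θ : ℝ) (hθ : 0 < θ)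
    (hlow : ∀ ℓ : ℕ, 1 ≤ ℓ → (θ * (ℓ : ℝ))⁻¹ ≤ ‖(γ : ℚ_[p]) + (ℓ : ℚ_[p])‖) :
    ∀ n : ℕ, 1 ≤ n →
      ‖τ⁻¹ ^ n * ∏ ℓ ∈ Finset.range n, ((γ : ℚ_[p]) + 1 + (ℓ : ℚ_[p]))‖ ≤
          pMatNorm (τ⁻¹ ^ n • upProd ((γ : ℚ_[p]) • (1 : Matrix (Fin m) (Fin m) ℚ_[p]) + N) n) ∧
        pMatNorm (τ⁻¹ ^ n • upProd ((γ : ℚ_[p]) • (1 : Matrix (Fin m) (Fin m) ℚ_[p]) + N) n) ≤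
          (θ * (n : ℝ)) ^ (m - 1) *
            ‖τ⁻¹ ^ n * ∏ ℓ ∈ Finset.range n, ((γ : ℚ_[p]) + 1 + (ℓ : ℚ_[p]))‖ := by
  intro n hn
  have hc : ∀ ℓ ∈ range n, (θ * n)⁻¹ ≤ ‖(γ : ℚ_[p]) + 1 + ℓ‖ := fun ℓ hℓ => by
    have hℓn : (ℓ : ℝ) + 1 ≤ n := by exact_mod_cast mem_range.mp hℓ
    calc (θ * n)⁻¹ ≤ (θ * ((ℓ + 1 : ℕ) : ℝ))⁻¹ := by push_cast; gcongr
      _ ≤ ‖(γ : ℚ_[p]) + 1 + ℓ‖ := by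
          convert hlow (ℓ + 1) (by omega) using 2
          push_cast
          ring
  have hθn : 1 ≤ θ * n := by
    have hγ : ‖(γ : ℚ_[p]) + 1 + ((0 : ℕ) : ℚ_[p])‖ ≤ 1 := by
      simpa [← PadicInt.coe_one, ← PadicInt.coe_add] using PadicInt.norm_le_one (γ + 1)
    have := (hc 0 (mem_range.mpr hn)).trans hγ
    rwa [inv_le_one₀ (by positivity)] at this
  have hP := norm_coeff_prod_X_add_C_le (range n) _ (by positivity) hc
  rw [upProd_smul_one_add_eq_aeval]
  obtain ⟨i₀⟩ : Nonempty (Fin m) := inferInstance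
  refine ⟨?_, pMatNorm_le fun i j => ?_⟩
  · calc _ = ‖(τ⁻¹ ^ n • aeval N (∏ ℓ ∈ range n, (X + C ((γ : ℚ_[p]) + 1 + ℓ)))) i₀ i₀‖ := by
          rw [Matrix.smul_apply, Matrix.aeval_apply_self_of_strictlyUpper htri, coeff_zero_prod]
          simp
      _ ≤ _ := norm_le_pMatNorm _ _ _
  · rw [Matrix.smul_apply, smul_eq_mul, norm_mul, norm_mul, mul_left_comm]
    gcongr
    exact Matrix.norm_aeval_apply_le_of_strictlyUpper htri hbd hθn hP i j

/-- For a Jordan block `J = γI + N` over `ℚ_p` (`γ ∈ ℤ_p`, `N` strictly upper triangular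
nilpotent with entries of norm ≤ 1), if `|γ + ℓ|_p ≥ (θℓ)⁻¹` for all `ℓ ≥ 1`, then
`|τ^{-n}(γ+1)_n|_p ≤ ‖C_{J,τ}(n)‖_p ≤ (θn)^{m-1} |τ^{-n}(γ+1)_n|_p` for all `n ≥ 1`. -/
theorem jordan_block_Cmat_norm_bounds
    (p : ℕ) [Fact p.Prime] (m : ℕ) [NeZero m] (γ : ℤ_[p])
    (N : Matrix (Fin m) (Fin m) ℚ_[p])
    (htri : ∀ i j : Fin m, (j : ℕ) ≤ (i : ℕ) → N i j = 0)
    (hnil : N ^ m = 0) (hbd : ∀ i j : Fin m, ‖N i j‖ ≤ 1)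
    (τ : ℚ_[p]) (hτ : τ ≠ 0) (θ : ℝ) (hθ : 0 < θ)
    (hlow : ∀ ℓ : ℕ, 1 ≤ ℓ → (θ * (ℓ : ℝ))⁻¹ ≤ ‖(γ : ℚ_[p]) + (ℓ : ℚ_[p])‖) :
    ∀ n : ℕ, 1 ≤ n →
      ‖τ⁻¹ ^ n * ∏ ℓ ∈ Finset.range n, ((γ : ℚ_[p]) + 1 + (ℓ : ℚ_[p]))‖ ≤
          pMatNorm (τ⁻¹ ^ n • upProd ((γ : ℚ_[p]) • (1 : Matrix (Fin m) (Fin m) ℚ_[p]) + N) n) ∧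
        pMatNorm (τ⁻¹ ^ n • upProd ((γ : ℚ_[p]) • (1 : Matrix (Fin m) (Fin m) ℚ_[p]) + N) n) ≤
          (θ * (n : ℝ)) ^ (m - 1) *
            ‖τ⁻¹ ^ n * ∏ ℓ ∈ Finset.range n, ((γ : ℚ_[p]) + 1 + (ℓ : ℚ_[p]))‖ :=
  jordan_block_Cmat_norm_bounds_general p m γ N htri hbd τ θ hθ hlow
end
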